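/- arXiv:2208.04927 — 4 statements merged into one kernel-verified Lean document; each statement's English description precedes it below -/
import Mathlib

section
/- Let Q ≥ 1 and w ≥ 1 be natural numbers, let the hash function h be drawn uniformly at random from the finite set of all functions Fin Q → Fin w, fix an index i ∈ Fin Q, let g : Fin Q → ℝ be nonnegative weights with G_S := ∑_{k} g(k) > 0, and define the collision noise N(h) = ∑_{k ≠ i} g(k) · 1[h(k) = h(i)]. Then for every real c > 0, the probability (over the uniform choice of h) that N ≥ c · G_S / w is at most 1/c. -/
/-!
For `k ≠ i` the collision `h k = h i` happens for exactly a `1 / w` fraction of all hash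
functions (splitting off the coordinate `k`, the value `h k` is forced), so the noise averages
to at most `G_S / w`; Markov's inequality, in the counting form `#{N ≥ t} • t ≤ ∑ N`, finishes.
-/

open Finset
open scoped Classical

theorem card_filter_nsmul_le_sum {ι M : Type*} [AddCommMonoid M] [PartialOrder M]
    [IsOrderedAddMonoid M] (s : Finset ι) (f : ι → M) (t : M) (hf : ∀ x ∈ s, 0 ≤ f x) :
    #{x ∈ s | t ≤ f x} • t ≤ ∑ x ∈ s, f x :=
  calc #{x ∈ s | t ≤ f x} • t
      ≤ ∑ x ∈ s with t ≤ f x, f x := card_nsmul_le_sum _ _ _ fun _ hx ↦ (mem_filter.mp hx).2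
    _ ≤ ∑ x ∈ s, f x :=
      sum_le_sum_of_subset_of_nonneg (filter_subset _ _) fun x hx _ ↦ hf x hx

section Collisions

variable {α β : Type*} [Fintype α] [DecidableEq α] [Fintype β] [DecidableEq β]

def subtypeApplyEqApplyEquiv {i k : α} (hik : i ≠ k) :
    {h : α → β // h k = h i} ≃ ({j // j ≠ k} → β) where
  toFun h j := h.1 j
  invFun f := ⟨fun j ↦ if hj : j = k then f ⟨i, hik⟩ else f ⟨j, hj⟩, by simp [hik]⟩
  left_inv h := by
    ext j
    by_cases hj : j = k
    · subst hj; simp [h.2]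
    · simp [hj]
  right_inv f := by
    ext ⟨j, hj⟩
    simp [hj]

theorem card_filter_apply_eq_apply_mul {i k : α} (hik : i ≠ k) :
    #{h : α → β | h k = h i} * Fintype.card β = Fintype.card (α → β) := by
  rw [Fintype.card_congr (Equiv.funSplitAt k β), Fintype.card_prod, mul_comm,
    ← Fintype.card_subtype, Fintype.card_congr (subtypeApplyEqApplyEquiv hik)]

def collisionNoise (g : α → ℝ) (i : α) (h : α → β) : ℝ :=
  ∑ k ∈ univ.erase i, g k * if h k = h i then 1 else 0

theorem sum_collisionNoise_mul_card (g : α → ℝ) (i : α) :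
    (∑ h : α → β, collisionNoise g i h) * Fintype.card β =
      (∑ k ∈ univ.erase i, g k) * Fintype.card (α → β) := by
  simp only [collisionNoise]
  rw [sum_comm, sum_mul, sum_mul]
  refine sum_congr rfl fun k hk ↦ ?_
  rw [← mul_sum, mul_assoc, sum_boole]
  congr 1
  exact_mod_cast card_filter_apply_eq_apply_mul (ne_of_mem_erase hk).symm

end Collisions

theorem hydra_noise_markov_general (Q w : ℕ) (hw : 1 ≤ w)
    (i : Fin Q) (g : Fin Q → ℝ) (hg : ∀ k, 0 ≤ g k)
    (hGS : 0 < ∑ k, g k) (c : ℝ) (hc : 0 < c) :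
    ((Finset.univ.filter fun h : Fin Q → Fin w =>
          c * (∑ k, g k) / w ≤
            ∑ k ∈ Finset.univ.erase i, g k * (if h k = h i then (1 : ℝ) else 0)).card : ℝ) /
        (Fintype.card (Fin Q → Fin w) : ℝ)
      ≤ 1 / c := by
  set G := ∑ k, g k
  set S := univ.filter fun h : Fin Q → Fin w => c * G / w ≤ collisionNoise g i h
  have hw' : (0 : ℝ) < w := by exact_mod_cast hw
  have hcard : (0 : ℝ) < Fintype.card (Fin Q → Fin w) := by
    exact_mod_cast Fintype.card_pos_iff.mpr ⟨fun _ : Fin Q ↦ (⟨0, hw⟩ : Fin w)⟩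
  have markov : #S * (c * G / w) ≤ ∑ h : Fin Q → Fin w, collisionNoise g i h := by
    simpa using card_filter_nsmul_le_sum univ (collisionNoise g i) (c * G / w)
      fun h _ ↦ sum_nonneg fun k _ ↦ mul_nonneg (hg k) (by positivity)
  have mean : (∑ h : Fin Q → Fin w, collisionNoise g i h) * w ≤
      G * Fintype.card (Fin Q → Fin w) := by
    have := sum_collisionNoise_mul_card (β := Fin w) g i
    rw [Fintype.card_fin] at this
    rw [this]
    gcongr
    exact sum_le_sum_of_subset_of_nonneg (erase_subset i univ) fun k _ _ ↦ hg k
  change (#S : ℝ) / _ ≤ 1 / c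
  rw [div_le_div_iff₀ hcard hc, one_mul]
  have := (mul_le_mul_of_nonneg_right markov hw'.le).trans mean
  rw [mul_assoc, div_mul_cancel₀ _ hw'.ne'] at this
  exact le_of_mul_le_mul_right (by linarith) hGS

/-- Markov tail bound for the collision noise: with `h` drawn uniformly from all
functions `Fin Q → Fin w`, the probability that
`N h = ∑_{k ≠ i} g k · 1[h k = h i]` is at least `c · G_S / w`, where
`G_S = ∑ k, g k > 0`, is at most `1 / c`. -/
theorem hydra_noise_markov (Q w : ℕ) (hQ : 1 ≤ Q) (hw : 1 ≤ w)
    (i : Fin Q) (g : Fin Q → ℝ) (hg : ∀ k, 0 ≤ g k)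
    (hGS : 0 < ∑ k, g k) (c : ℝ) (hc : 0 < c) :
    ((Finset.univ.filter fun h : Fin Q → Fin w =>
          c * (∑ k, g k) / w ≤
            ∑ k ∈ Finset.univ.erase i, g k * (if h k = h i then (1 : ℝ) else 0)).card : ℝ) /
        (Fintype.card (Fin Q → Fin w) : ℝ)
      ≤ 1 / c :=
  hydra_noise_markov_general Q w hw i g hg hGS c hc
end

section
/- Let (Ω, μ) be a probability space, let ε_US ∈ (0,1), ε > 0, δ_US ≥ 0, c > 0 be reals, let G_i ≥ 0 and G_S > 0 be reals, and set w = c(1 + ε_US)/ε. Let N : Ω → ℝ be an integrable random variable with N ≥ 0 almost everywhere and E[N] ≤ G_S / w, and let X : Ω → ℝ be a random variable with μ{ω : (G_i + N(ω))(1 − ε_US) ≤ X(ω) ≤ (G_i + N(ω))(1 + ε_US)} ≥ 1 − δ_US. Then μ{ω : G_i(1 − ε_US) ≤ X(ω) ≤ G_i(1 + ε_US) + ε · G_S} ≥ 1 − δ_US − 1/c. -/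
/-!
Off an event of probability at most `1/c`, the collision noise `N` stays below the threshold
`t = ε G_S / (1 + ε_US)`: this is Markov's inequality, since `E[N] ≤ G_S / w = t / c`.
Whenever the universal sketch is `(1 ± ε_US)`-accurate on `G_i + N` and `0 ≤ N < t`, the
estimate lies in `[G_i (1 - ε_US), G_i (1 + ε_US) + t (1 + ε_US)]`, and `t (1 + ε_US) = ε G_S`.
A union bound over the two failure events finishes the proof.
-/

open MeasureTheory

theorem meas_ge_le_ofReal_div_of_integral_le {α : Type*} [MeasurableSpace α] {μ : Measure α}
    [IsFiniteMeasure μ] {f : α → ℝ} (hf_nonneg : 0 ≤ᵐ[μ] f) (hf_int : Integrable f μ)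
    {a t : ℝ} (ht : 0 < t) (hf_le : ∫ x, f x ∂μ ≤ a) :
    μ {x | t ≤ f x} ≤ ENNReal.ofReal (a / t) := by
  rw [← ofReal_measureReal]
  refine ENNReal.ofReal_le_ofReal ((le_div_iff₀' ht).2 ?_)
  exact (mul_meas_ge_le_integral_of_nonneg hf_nonneg hf_int t).trans hf_le

theorem ofReal_sub_le_measure_of_ae_subset_union {α : Type*} [MeasurableSpace α]
    {μ : Measure α} {s t u : Set α} {p q : ℝ} (hq : 0 ≤ q) (hs : ENNReal.ofReal p ≤ μ s)
    (hu : μ u ≤ ENNReal.ofReal q) (hstu : s ≤ᵐ[μ] (t ∪ u : Set α)) :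
    ENNReal.ofReal (p - q) ≤ μ t := by
  rw [ENNReal.ofReal_sub p hq, tsub_le_iff_right]
  calc ENNReal.ofReal p ≤ μ s := hs
    _ ≤ μ (t ∪ u) := measure_mono_ae hstu
    _ ≤ μ t + μ u := measure_union_le t u
    _ ≤ μ t + ENNReal.ofReal q := by gcongr

theorem multiplicative_bounds_of_bounds_add_nonneg {g n x e : ℝ} (he : e ∈ Set.Icc (-1 : ℝ) 1)
    (hn : 0 ≤ n) (hx : (g + n) * (1 - e) ≤ x ∧ x ≤ (g + n) * (1 + e)) :
    g * (1 - e) ≤ x ∧ x ≤ g * (1 + e) + n * (1 + e) := by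
  obtain ⟨he₁, he₂⟩ := he
  constructor <;> nlinarith [hx.1, hx.2]

theorem hydra_single_row_general {Ω : Type*} [MeasurableSpace Ω] (μ : Measure Ω)
    [IsProbabilityMeasure μ]
    (ε_US ε δ_US c G_i G_S w : ℝ)
    (hε_US : ε_US ∈ Set.Ioo (0 : ℝ) 1) (hε : 0 < ε) (hc : 0 < c)
    (hGS : 0 < G_S) (hw : w = c * (1 + ε_US) / ε)
    (N X : Ω → ℝ)
    (hNint : Integrable N μ) (hNnonneg : ∀ᵐ ω ∂μ, 0 ≤ N ω)
    (hNexp : ∫ ω, N ω ∂μ ≤ G_S / w)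
    (hX : ENNReal.ofReal (1 - δ_US) ≤
      μ {ω | (G_i + N ω) * (1 - ε_US) ≤ X ω ∧ X ω ≤ (G_i + N ω) * (1 + ε_US)}) :
    ENNReal.ofReal (1 - δ_US - 1 / c) ≤
      μ {ω | G_i * (1 - ε_US) ≤ X ω ∧ X ω ≤ G_i * (1 + ε_US) + ε * G_S} := by
  obtain ⟨hε_US₀, hε_US₁⟩ := hε_US
  set t := ε * G_S / (1 + ε_US) with ht
  have ht_mul : t * (1 + ε_US) = ε * G_S := by rw [ht]; field_simp
  have hmarkov :=
    meas_ge_le_ofReal_div_of_integral_le hNnonneg hNint (t := t) (by positivity) hNexp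
  rw [show G_S / w / t = 1 / c by rw [hw, ht]; field_simp] at hmarkov
  refine ofReal_sub_le_measure_of_ae_subset_union (by positivity) hX hmarkov ?_
  filter_upwards [hNnonneg] with ω hN hω
  by_cases hNt : t ≤ N ω
  · exact Or.inr hNt
  · have hω' := multiplicative_bounds_of_bounds_add_nonneg ⟨by linarith, hε_US₁.le⟩ hN hω
    refine Or.inl ⟨hω'.1, hω'.2.trans ?_⟩
    rw [← ht_mul]
    gcongr
    linarith

/-- Single-row guarantee in the proof of Hydra's Theorem 2: with row width
`w = c(1 + ε_US)/ε`, nonnegative integrable collision noise `N` with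
`E[N] ≤ G_S / w`, and an estimate `X` satisfying the `(1 ± ε_US)`-multiplicative
guarantee on `G_i + N` with probability at least `1 − δ_US`, the event
`G_i(1 − ε_US) ≤ X ≤ G_i(1 + ε_US) + ε·G_S` has probability at least
`1 − δ_US − 1/c`. -/
theorem hydra_single_row {Ω : Type*} [MeasurableSpace Ω] (μ : Measure Ω)
    [IsProbabilityMeasure μ]
    (ε_US ε δ_US c G_i G_S w : ℝ)
    (hε_US : ε_US ∈ Set.Ioo (0 : ℝ) 1) (hε : 0 < ε) (hδ_US : 0 ≤ δ_US) (hc : 0 < c)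
    (hGi : 0 ≤ G_i) (hGS : 0 < G_S) (hw : w = c * (1 + ε_US) / ε)
    (N X : Ω → ℝ) (hNm : Measurable N) (hXm : Measurable X)
    (hNint : Integrable N μ) (hNnonneg : ∀ᵐ ω ∂μ, 0 ≤ N ω)
    (hNexp : ∫ ω, N ω ∂μ ≤ G_S / w)
    (hX : ENNReal.ofReal (1 - δ_US) ≤
      μ {ω | (G_i + N ω) * (1 - ε_US) ≤ X ω ∧ X ω ≤ (G_i + N ω) * (1 + ε_US)}) :
    ENNReal.ofReal (1 - δ_US - 1 / c) ≤
      μ {ω | G_i * (1 - ε_US) ≤ X ω ∧ X ω ≤ G_i * (1 + ε_US) + ε * G_S} :=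
  hydra_single_row_general μ ε_US ε δ_US c G_i G_S w hε_US hε hc hGS hw N X hNint hNnonneg hNexp hX
end

section
/- Let (Ω, μ) be a probability space, let r ≥ 1, let ε_US ∈ (0,1), ε > 0, δ_US ≥ 0, c > 0 be reals with p := 1 − δ_US − 1/c > 1/2, let G_i ≥ 0 and G_S > 0 be reals, and set w = c(1 + ε_US)/ε. For each j ∈ {1,…,r} let N_j, X_j : Ω → ℝ be random variables such that: (i) the pairs (N_1, X_1), …, (N_r, X_r) are mutually independent; (ii) N_j ≥ 0 almost everywhere and N_j is integrable with E[N_j] ≤ G_S / w; and (iii) μ{ω : (G_i + N_j(ω))(1 − ε_US) ≤ X_j(ω) ≤ (G_i + N_j(ω))(1 + ε_US)} ≥ 1 − δ_US. Let Ĝ_i(ω) be the median of (X_1(ω), …, X_r(ω)), defined as the value at index ⌊r/2⌋ (0-indexed) of the non-decreasing rearrangement. Then μ{ω : G_i(1 − ε_US) ≤ Ĝ_i(ω) ≤ G_i(1 + ε_US) + ε · G_S} ≥ 1 − exp(−2 r (p − 1/2)²). -/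
/-!
Call row `j` good when `X_j` lies in the `(1 ± ε_US)` window around `G_i + N_j` and
`0 ≤ N_j < K := ε G_S / (1 + ε_US)`. Markov's inequality gives `P(N_j ≥ K) ≤ E[N_j] / K ≤ 1 / c`,
so each row is good with probability at least `p`, independently of the other rows. On a good row
`G_i (1 - ε_US) ≤ X_j ≤ G_i (1 + ε_US) + K (1 + ε_US) = G_i (1 + ε_US) + ε G_S`, and the median
lies in this interval as soon as more than half of the rows are good. By Hoeffding's inequality
at most `r / 2` rows are good with probability at most `exp (-2 r (p - 1/2)²)`.
-/

open MeasureTheory ProbabilityTheory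

/-- The median of `x : Fin r → ℝ` (for `r ≥ 1`): the value at index `⌊r/2⌋`
(0-indexed) of the non-decreasing rearrangement of `x`. -/
noncomputable def sortedMedian {r : ℕ} (hr : 0 < r) (x : Fin r → ℝ) : ℝ :=
  x (Tuple.sort x ⟨r / 2, Nat.div_lt_self hr one_lt_two⟩)

open Real

section SortedMedian

variable {r : ℕ} (hr : 0 < r) (x : Fin r → ℝ)

theorem card_filter_lt_sortedMedian_le :
    (Finset.univ.filter fun j => x j < sortedMedian hr x).card ≤ r / 2 := by
  set m : Fin r := ⟨r / 2, Nat.div_lt_self hr one_lt_two⟩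
  calc (Finset.univ.filter fun j => x j < x (Tuple.sort x m)).card ≤ (Finset.Iio m).card := by
        refine Finset.card_le_card_of_injOn (Tuple.sort x).symm (fun j hj => ?_)
          (Tuple.sort x).symm.injective.injOn
        rw [Finset.mem_coe, Finset.mem_filter] at hj
        rw [Finset.mem_coe, Finset.mem_Iio]
        by_contra! hmj
        have := Tuple.monotone_sort x hmj
        rw [Function.comp_apply, Function.comp_apply, Equiv.apply_symm_apply] at this
        exact hj.2.not_ge this
    _ = r / 2 := Fin.card_Iio m

theorem card_filter_sortedMedian_lt_le :
    (Finset.univ.filter fun j => sortedMedian hr x < x j).card ≤ r / 2 := by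
  set m : Fin r := ⟨r / 2, Nat.div_lt_self hr one_lt_two⟩
  calc (Finset.univ.filter fun j => x (Tuple.sort x m) < x j).card ≤ (Finset.Ioi m).card := by
        refine Finset.card_le_card_of_injOn (Tuple.sort x).symm (fun j hj => ?_)
          (Tuple.sort x).symm.injective.injOn
        rw [Finset.mem_coe, Finset.mem_filter] at hj
        rw [Finset.mem_coe, Finset.mem_Ioi]
        by_contra! hmj
        have := Tuple.monotone_sort x hmj
        rw [Function.comp_apply, Function.comp_apply, Equiv.apply_symm_apply] at this
        exact hj.2.not_ge this
    _ ≤ r / 2 := by simp only [Fin.card_Ioi, m]; omega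

theorem sortedMedian_mem_Icc_of_lt_two_mul_card {a b : ℝ} (A : Finset (Fin r))
    (hA : r < 2 * A.card) (hx : ∀ j ∈ A, x j ∈ Set.Icc a b) : sortedMedian hr x ∈ Set.Icc a b := by
  constructor
  · by_contra! hlt
    have : A ⊆ Finset.univ.filter fun j => sortedMedian hr x < x j := fun j hj =>
      Finset.mem_filter.2 ⟨Finset.mem_univ j, hlt.trans_le (hx j hj).1⟩
    have := (Finset.card_le_card this).trans (card_filter_sortedMedian_lt_le hr x)
    omega
  · by_contra! hlt
    have : A ⊆ Finset.univ.filter fun j => x j < sortedMedian hr x := fun j hj =>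
      Finset.mem_filter.2 ⟨Finset.mem_univ j, (hx j hj).2.trans_lt hlt⟩
    have := (Finset.card_le_card this).trans (card_filter_lt_sortedMedian_le hr x)
    omega

end SortedMedian

namespace ProbabilityTheory

variable {Ω : Type*} [MeasurableSpace Ω] {μ : Measure Ω}

theorem iIndepFun.iIndepSet_preimage {ι : Type*} {β : ι → Type*} {m : ∀ i, MeasurableSpace (β i)}
    {f : ∀ i, Ω → β i} (h : iIndepFun f μ) (hf : ∀ i, Measurable (f i))
    {T : ∀ i, Set (β i)} (hT : ∀ i, MeasurableSet (T i)) :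
    iIndepSet (fun i => f i ⁻¹' T i) μ :=
  (iIndepSet_iff_meas_biInter fun i => hf i (hT i)).2
    fun s => h.measure_inter_preimage_eq_mul s fun i _ => hT i

open scoped Classical in
theorem iIndepSet.measureReal_card_le_le_exp {ι : Type*} [Fintype ι] {A : ι → Set Ω}
    (hA : ∀ i, MeasurableSet (A i)) (h : iIndepSet A μ) {p t : ℝ}
    (hp : ∀ i, p ≤ μ.real (A i)) (ht : t ≤ Fintype.card ι * p) :
    μ.real {ω | ((Finset.univ.filter fun i => ω ∈ A i).card : ℝ) ≤ t} ≤
      exp (-2 * (Fintype.card ι * p - t) ^ 2 / Fintype.card ι) := by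
  have := h.isProbabilityMeasure
  set Y : ι → Ω → ℝ := fun i => (A i).indicator 1
  have hYm : ∀ i, Measurable (Y i) := fun i => measurable_const.indicator (hA i)
  have hY01 : ∀ i, ∀ᵐ ω ∂μ, Y i ω ∈ Set.Icc (0 : ℝ) 1 := fun i =>
    ae_of_all _ fun ω => by by_cases hω : ω ∈ A i <;> simp [Y, hω]
  have hmean : ∀ i, μ[Y i] = μ.real (A i) := fun i => by
    simp [Y, integral_indicator_one (hA i)]
  have hcount : ∀ ω, ∑ i, Y i ω = ((Finset.univ.filter fun i => ω ∈ A i).card : ℝ) := by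
    intro ω
    simp [Y, Set.indicator_apply, Finset.sum_boole]
  have hsubG : ∀ i ∈ (Finset.univ : Finset ι),
      HasSubgaussianMGF (fun ω => μ[Y i] - Y i ω) 4⁻¹ μ := fun i _ => by
    convert (hasSubgaussianMGF_of_mem_Icc (hYm i).aemeasurable (hY01 i)).neg using 1
    · ext ω
      simp
    · norm_num
  have hindep : iIndepFun (fun i ω => μ[Y i] - Y i ω) μ := by
    exact (h.iIndepFun_indicator (β := ℝ)).comp (fun (i : ι) (y : ℝ) => μ[Y i] - y)
      fun i => by fun_prop
  calc μ.real {ω | ((Finset.univ.filter fun i => ω ∈ A i).card : ℝ) ≤ t}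
      ≤ μ.real {ω | Fintype.card ι * p - t ≤ ∑ i, (μ[Y i] - Y i ω)} := by
        refine measureReal_mono fun ω hω => ?_
        have : Fintype.card ι * p ≤ ∑ i, μ[Y i] := by
          rw [← nsmul_eq_mul, ← Finset.card_univ, ← Finset.sum_const]
          exact Finset.sum_le_sum fun i _ => (hp i).trans (hmean i).ge
        simp only [Set.mem_ofPred_eq, Finset.sum_sub_distrib, hcount] at hω ⊢
        linarith
    _ ≤ _ := HasSubgaussianMGF.measure_sum_ge_le_of_iIndepFun hindep hsubG (by linarith)
    _ = exp (-2 * (Fintype.card ι * p - t) ^ 2 / Fintype.card ι) := by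
        rw [Finset.sum_const, Finset.card_univ, nsmul_eq_mul]
        push_cast
        congr 1
        ring

open scoped Classical in
theorem iIndepSet.one_sub_exp_le_measureReal_sortedMedian_mem_Icc {r : ℕ} (hr : 0 < r)
    {A : Fin r → Set Ω} (hA : ∀ j, MeasurableSet (A j)) (h : iIndepSet A μ) {p : ℝ}
    (hp_half : 1 / 2 ≤ p) (hp : ∀ j, p ≤ μ.real (A j)) {X : Fin r → Ω → ℝ} {a b : ℝ}
    (hX : ∀ j, ∀ ω ∈ A j, X j ω ∈ Set.Icc a b) :
    1 - exp (-2 * r * (p - 1 / 2) ^ 2) ≤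
      μ.real {ω | sortedMedian hr (fun j => X j ω) ∈ Set.Icc a b} := by
  have := h.isProbabilityMeasure
  set count : Ω → ℝ := fun ω => ((Finset.univ.filter fun j => ω ∈ A j).card : ℝ)
  have hhoeffding : μ.real {ω | count ω ≤ r / 2} ≤ exp (-2 * r * (p - 1 / 2) ^ 2) := by
    have := h.measureReal_card_le_le_exp hA hp (t := r / 2)
      (by rw [Fintype.card_fin]; nlinarith)
    rw [Fintype.card_fin] at this
    convert this using 2
    field_simp
  have hmajority : {ω | r / 2 < count ω} ⊆
      {ω | sortedMedian hr (fun j => X j ω) ∈ Set.Icc a b} := by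
    intro ω hω
    have hcard : (r : ℝ) < 2 * (Finset.univ.filter fun j => ω ∈ A j).card := by
      simp only [Set.mem_ofPred_eq, count] at hω
      linarith
    exact sortedMedian_mem_Icc_of_lt_two_mul_card hr _ _ (by exact_mod_cast hcard)
      fun j hj => hX j ω (Finset.mem_filter.1 hj).2
  calc 1 - exp (-2 * r * (p - 1 / 2) ^ 2) ≤ 1 - μ.real {ω | count ω ≤ r / 2} := by linarith
    _ ≤ μ.real {ω | r / 2 < count ω} := by
        have := measureReal_union_le (μ := μ) {ω | count ω ≤ r / 2} {ω | r / 2 < count ω}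
        rw [show {ω | count ω ≤ r / 2} ∪ {ω | r / 2 < count ω} = Set.univ from
          Set.eq_univ_of_forall fun ω => le_or_gt (count ω) (r / 2), probReal_univ] at this
        linarith
    _ ≤ _ := measureReal_mono hmajority

theorem measureReal_sub_integral_div_le_measureReal_inter_Ico [IsFiniteMeasure μ] (E : Set Ω)
    {N : Ω → ℝ} (hN0 : 0 ≤ᵐ[μ] N) (hNi : Integrable N μ) {K : ℝ} (hK : 0 < K) :
    μ.real E - (∫ ω, N ω ∂μ) / K ≤ μ.real (E ∩ {ω | N ω ∈ Set.Ico 0 K}) := by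
  have hmarkov : μ.real {ω | K ≤ N ω} ≤ (∫ ω, N ω ∂μ) / K := by
    rw [le_div_iff₀ hK, mul_comm]
    exact mul_meas_ge_le_integral_of_nonneg hN0 hNi K
  have hneg : μ.real {ω | N ω < 0} = 0 := by
    simp [measureReal_def, (by simpa using ae_iff.1 hN0 : μ {ω | N ω < 0} = 0)]
  have hcover : E ⊆ (E ∩ {ω | N ω ∈ Set.Ico 0 K} ∪ {ω | N ω < 0}) ∪ {ω | K ≤ N ω} := by
    intro ω hω
    by_cases h0 : N ω < 0
    · exact Or.inl (Or.inr h0)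
    by_cases hKN : K ≤ N ω
    · exact Or.inr hKN
    exact Or.inl (Or.inl ⟨hω, not_lt.1 h0, not_le.1 hKN⟩)
  have hunion := (measureReal_mono (μ := μ) hcover).trans ((measureReal_union_le _ _).trans
    (add_le_add_left (measureReal_union_le _ _) _))
  linarith

end ProbabilityTheory

theorem hydra_theorem2_general {Ω : Type*} [MeasurableSpace Ω] (μ : Measure Ω)
    [IsProbabilityMeasure μ]
    (r : ℕ) (hr : 0 < r)
    (ε_US ε δ_US c p G_i G_S w : ℝ)
    (hε_US : ε_US ∈ Set.Ioo (0 : ℝ) 1) (hε : 0 < ε) (hc : 0 < c)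
    (hp : p = 1 - δ_US - 1 / c) (hp2 : 1 / 2 < p)
    (hGS : 0 < G_S) (hw : w = c * (1 + ε_US) / ε)
    (N X : Fin r → Ω → ℝ)
    (hNm : ∀ j, Measurable (N j)) (hXm : ∀ j, Measurable (X j))
    (hindep : iIndepFun
      (fun j ω => (N j ω, X j ω)) μ)
    (hNnonneg : ∀ j, ∀ᵐ ω ∂μ, 0 ≤ N j ω)
    (hNint : ∀ j, Integrable (N j) μ)
    (hNexp : ∀ j, ∫ ω, N j ω ∂μ ≤ G_S / w)
    (hX : ∀ j, ENNReal.ofReal (1 - δ_US) ≤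
      μ {ω | (G_i + N j ω) * (1 - ε_US) ≤ X j ω ∧ X j ω ≤ (G_i + N j ω) * (1 + ε_US)}) :
    ENNReal.ofReal (1 - Real.exp (-2 * r * (p - 1 / 2) ^ 2)) ≤
      μ {ω | G_i * (1 - ε_US) ≤ sortedMedian hr (fun j => X j ω) ∧
             sortedMedian hr (fun j => X j ω) ≤ G_i * (1 + ε_US) + ε * G_S} := by
  obtain ⟨hε_US0, hε_US1⟩ := hε_US
  set K := ε * G_S / (1 + ε_US) with hK_def
  have hK : 0 < K := by positivity
  set T : Set (ℝ × ℝ) := {q | (G_i + q.1) * (1 - ε_US) ≤ q.2 ∧ q.2 ≤ (G_i + q.1) * (1 + ε_US)} ∩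
    {q | q.1 ∈ Set.Ico 0 K}
  have hT : MeasurableSet T := by measurability
  set good : Fin r → Set Ω := fun j =>
    {ω | (G_i + N j ω) * (1 - ε_US) ≤ X j ω ∧ X j ω ≤ (G_i + N j ω) * (1 + ε_US)} ∩
      {ω | N j ω ∈ Set.Ico 0 K}
  have hgood_meas : ∀ j, MeasurableSet (good j) := fun j => (hNm j).prodMk (hXm j) hT
  have hgood_indep : iIndepSet good μ :=
    hindep.iIndepSet_preimage (fun j => (hNm j).prodMk (hXm j)) fun _ => hT
  have hgood_prob : ∀ j, p ≤ μ.real (good j) := by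
    intro j
    refine le_trans ?_
      (measureReal_sub_integral_div_le_measureReal_inter_Ico _ (hNnonneg j) (hNint j) hK)
    have hE := (ENNReal.ofReal_le_iff_le_toReal (measure_ne_top μ _)).1 (hX j)
    have hN : (∫ ω, N j ω ∂μ) / K ≤ 1 / c := by
      rw [div_le_iff₀ hK, one_div_mul_eq_div]
      refine (hNexp j).trans_eq ?_
      rw [hw, hK_def]
      field_simp
    rw [hp, measureReal_def]
    linarith
  have hgood_bounds : ∀ j, ∀ ω ∈ good j,
      X j ω ∈ Set.Icc (G_i * (1 - ε_US)) (G_i * (1 + ε_US) + ε * G_S) := by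
    rintro j ω ⟨⟨hlow, hup⟩, hN0, hNK⟩
    have hKε : K * (1 + ε_US) = ε * G_S := by rw [hK_def]; field_simp
    constructor <;> nlinarith
  rw [ENNReal.ofReal_le_iff_le_toReal (measure_ne_top μ _)]
  exact hgood_indep.one_sub_exp_le_measureReal_sortedMedian_mem_Icc hr hgood_meas hp2.le
    hgood_prob hgood_bounds

/-- Hydra's Theorem 2 (accuracy guarantee of the Hydra-sketch): with `r` rows of
width `w = c(1 + ε_US)/ε`, mutually independent per-row pairs `(N_j, X_j)` of
collision noise and universal-sketch estimate, `N_j ≥ 0` a.e. with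
`E[N_j] ≤ G_S / w`, and each `X_j` approximating `G_i + N_j` within a
`(1 ± ε_US)` factor with probability at least `1 − δ_US`, the median `Ĝ_i` of the
per-row estimates satisfies `G_i(1 − ε_US) ≤ Ĝ_i ≤ G_i(1 + ε_US) + ε·G_S` with
probability at least `1 − exp(−2 r (p − 1/2)²)` where `p = 1 − δ_US − 1/c`. -/
theorem hydra_theorem2 {Ω : Type*} [MeasurableSpace Ω] (μ : Measure Ω)
    [IsProbabilityMeasure μ]
    (r : ℕ) (hr : 0 < r)
    (ε_US ε δ_US c p G_i G_S w : ℝ)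
    (hε_US : ε_US ∈ Set.Ioo (0 : ℝ) 1) (hε : 0 < ε) (hδ_US : 0 ≤ δ_US) (hc : 0 < c)
    (hp : p = 1 - δ_US - 1 / c) (hp2 : 1 / 2 < p)
    (hGi : 0 ≤ G_i) (hGS : 0 < G_S) (hw : w = c * (1 + ε_US) / ε)
    (N X : Fin r → Ω → ℝ)
    (hNm : ∀ j, Measurable (N j)) (hXm : ∀ j, Measurable (X j))
    (hindep : iIndepFun
      (fun j ω => (N j ω, X j ω)) μ)
    (hNnonneg : ∀ j, ∀ᵐ ω ∂μ, 0 ≤ N j ω)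
    (hNint : ∀ j, Integrable (N j) μ)
    (hNexp : ∀ j, ∫ ω, N j ω ∂μ ≤ G_S / w)
    (hX : ∀ j, ENNReal.ofReal (1 - δ_US) ≤
      μ {ω | (G_i + N j ω) * (1 - ε_US) ≤ X j ω ∧ X j ω ≤ (G_i + N j ω) * (1 + ε_US)}) :
    ENNReal.ofReal (1 - Real.exp (-2 * r * (p - 1 / 2) ^ 2)) ≤
      μ {ω | G_i * (1 - ε_US) ≤ sortedMedian hr (fun j => X j ω) ∧
             sortedMedian hr (fun j => X j ω) ≤ G_i * (1 + ε_US) + ε * G_S} :=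
  hydra_theorem2_general μ r hr ε_US ε δ_US c p G_i G_S w hε_US hε hc hp hp2 hGS hw N X hNm hXm
    hindep hNnonneg hNint hNexp hX
end

section
/- Under the same hypotheses as Hydra's Theorem 2 — probability space (Ω, μ); r ≥ 1; reals ε_US ∈ (0,1), ε > 0, δ_US ≥ 0, c > 0 with p := 1 − δ_US − 1/c > 1/2; G_i ≥ 0, G_S > 0; w = c(1 + ε_US)/ε; mutually independent pairs (N_j, X_j) with N_j ≥ 0 a.e., E[N_j] ≤ G_S/w, and μ{(G_i + N_j)(1 − ε_US) ≤ X_j ≤ (G_i + N_j)(1 + ε_US)} ≥ 1 − δ_US for each j — if in addition δ ∈ (0,1) and r ≥ ln(1/δ) / (2 (p − 1/2)²), then the median estimate Ĝ_i of (X_1, …, X_r) satisfies μ{G_i(1 − ε_US) ≤ Ĝ_i ≤ G_i(1 + ε_US) + ε · G_S} ≥ 1 − δ. -/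
/-! A row fails, i.e. its estimate `X_j` leaves `[G_i(1 - ε_US), G_i(1 + ε_US) + ε G_S]`, only
if the universal sketch fails (probability `≤ δ_US`) or the collision noise reaches
`M = ε G_S / (1 + ε_US)`, which by Markov's inequality and `E[N_j] ≤ G_S / w` has probability
`≤ 1/c`. So the rows fail independently, each with probability `≤ 1 - p < 1/2`, and by
Hoeffding's inequality at least half of them fail with probability `≤ exp(-2r(p - 1/2)²) ≤ δ`.
Otherwise a strict majority of the estimates lies in the interval, and then so does their
median. -/

open MeasureTheory ProbabilityTheory

open Finset

lemma Fin.exists_mem_le_and_exists_mem_ge_of_lt_two_mul_card {r : ℕ} {S : Finset (Fin r)}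
    (hS : r < 2 * #S) (k : Fin r) (hk : (k : ℕ) = r / 2) :
    (∃ i ∈ S, i ≤ k) ∧ ∃ i ∈ S, k ≤ i := by
  constructor
  · by_contra! h
    have := card_le_card fun i hi => mem_Ioi.mpr (h i hi)
    rw [Fin.card_Ioi] at this
    omega
  · by_contra! h
    have := card_le_card fun i hi => mem_Iio.mpr (h i hi)
    rw [Fin.card_Iio] at this
    omega

lemma sortedMedian_mem_of_lt_two_mul_card {r : ℕ} (hr : 0 < r) (x : Fin r → ℝ) {s : Set ℝ}
    [DecidablePred (· ∈ s)] (hs : s.OrdConnected) (h : r < 2 * #{j | x j ∈ s}) :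
    sortedMedian hr x ∈ s := by
  set σ := Tuple.sort x
  have hcard : #{i | x (σ i) ∈ s} = #{j | x j ∈ s} := card_equiv σ (by simp)
  obtain ⟨⟨i, hi, hik⟩, ⟨i', hi', hki'⟩⟩ :=
    Fin.exists_mem_le_and_exists_mem_ge_of_lt_two_mul_card (hcard ▸ h)
      ⟨r / 2, Nat.div_lt_self hr one_lt_two⟩ rfl
  simp only [mem_filter, mem_univ, true_and] at hi hi'
  exact hs.out hi hi' ⟨Tuple.monotone_sort x hik, Tuple.monotone_sort x hki'⟩

section

variable {Ω : Type*} [MeasurableSpace Ω] {μ : Measure Ω}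

lemma measureReal_mul_card_le_card_filter_mem_le_exp [IsProbabilityMeasure μ] {ι β : Type*}
    [Fintype ι] [MeasurableSpace β] {Y : ι → Ω → β} (hind : iIndepFun Y μ)
    (hY : ∀ j, Measurable (Y j)) {s : Set β} [DecidablePred (· ∈ s)] (hs : MeasurableSet s)
    {q t : ℝ} (hq : ∀ j, μ.real (Y j ⁻¹' s) ≤ q) (hqt : q ≤ t) :
    μ.real {ω | t * Fintype.card ι ≤ #{j | Y j ω ∈ s}} ≤
      Real.exp (-2 * Fintype.card ι * (t - q) ^ 2) := by
  set n : ℝ := (Fintype.card ι : ℝ)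
  set B : ι → Ω → ℝ := fun j ω => s.indicator 1 (Y j ω)
  have hB : ∀ j, Measurable (B j) := fun j => (measurable_one.indicator hs).comp (hY j)
  have hmean : ∀ j, μ[B j] = μ.real (Y j ⁻¹' s) := fun j =>
    integral_indicator_one ((hY j) hs)
  have hcount : ∀ ω, (#{j | Y j ω ∈ s} : ℝ) = ∑ j, B j ω := by
    intro ω
    simp [B, Set.indicator_apply, sum_boole]
  have hsubG : ∀ j ∈ (univ : Finset ι),
      HasSubgaussianMGF (fun ω => B j ω - μ[B j]) ((‖(1 : ℝ) - 0‖₊ / 2) ^ 2) μ := by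
    refine fun j _ => hasSubgaussianMGF_of_mem_Icc (hB j).aemeasurable (ae_of_all _ fun ω => ?_)
    by_cases h : Y j ω ∈ s <;> simp [B, h]
  have hcentered : iIndepFun (fun j ω => B j ω - μ[B j]) μ := by
    exact hind.comp (fun j (z : β) => s.indicator (1 : β → ℝ) z - μ[B j])
      fun j => (measurable_one.indicator hs).sub_const _
  calc μ.real {ω | t * n ≤ #{j | Y j ω ∈ s}}
      ≤ μ.real {ω | n * (t - q) ≤ ∑ j, (B j ω - μ[B j])} := by
        refine measureReal_mono (fun ω hω => ?_)
        have : ∑ j, μ[B j] ≤ n * q := calc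
          ∑ j, μ[B j] ≤ ∑ _j : ι, q := sum_le_sum fun j _ => (hmean j).trans_le (hq j)
          _ = n * q := by simp [n]
        simp only [Set.mem_ofPred_eq, hcount, sum_sub_distrib] at hω ⊢
        linarith
    _ ≤ Real.exp (-(n * (t - q)) ^ 2 /
          (2 * ((∑ _j : ι, (‖(1 : ℝ) - 0‖₊ / 2) ^ 2 : NNReal) : ℝ))) :=
        HasSubgaussianMGF.measure_sum_ge_le_of_iIndepFun hcentered hsubG
          (mul_nonneg (Nat.cast_nonneg (Fintype.card ι)) (sub_nonneg.mpr hqt))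
    _ = Real.exp (-2 * n * (t - q) ^ 2) := by
        have hsum : ((∑ _j : ι, (‖(1 : ℝ) - 0‖₊ / 2) ^ 2 : NNReal) : ℝ) = n / 4 := by
          simp [n]
          ring
        rw [hsum]
        congr 1
        rcases eq_or_ne n 0 with hn | hn
        · simp [hn]
        · field_simp
          ring

lemma measureReal_compl_le_of_ofReal_one_sub_le [IsProbabilityMeasure μ] {s : Set Ω}
    (hs : MeasurableSet s) {d : ℝ} (h : ENNReal.ofReal (1 - d) ≤ μ s) : μ.real sᶜ ≤ d := by
  rw [ENNReal.ofReal_le_iff_le_toReal (measure_ne_top μ s), ← measureReal_def] at h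
  rw [probReal_compl_eq_one_sub hs]
  linarith

lemma ofReal_one_sub_le_measure_compl_of_measureReal_le [IsProbabilityMeasure μ] {s : Set Ω}
    {d : ℝ} (h : μ.real s ≤ d) : ENNReal.ofReal (1 - d) ≤ μ sᶜ :=
  calc ENNReal.ofReal (1 - d)
      ≤ ENNReal.ofReal (1 - μ.real s) := ENNReal.ofReal_le_ofReal (by linarith)
    _ = 1 - μ s := by
        rw [ENNReal.ofReal_sub _ measureReal_nonneg, ENNReal.ofReal_one, ofReal_measureReal]
    _ ≤ μ sᶜ := by
        rw [tsub_le_iff_left, ← measure_univ (μ := μ), ← Set.union_compl_self s]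
        exact measure_union_le s sᶜ

lemma measureReal_notMem_Icc_le_add_integral_div [IsFiniteMeasure μ] {X N : Ω → ℝ}
    (hN0 : 0 ≤ᵐ[μ] N) (hN : Integrable N μ) {G M a b U : ℝ} (ha : 0 ≤ a) (hb : 0 ≤ b)
    (hM : 0 < M) (hU : (G + M) * b ≤ U) :
    μ.real {ω | X ω ∉ Set.Icc (G * a) U} ≤
      μ.real {ω | X ω ∉ Set.Icc ((G + N ω) * a) ((G + N ω) * b)} + μ[N] / M := by
  calc μ.real {ω | X ω ∉ Set.Icc (G * a) U}
      ≤ μ.real ({ω | X ω ∉ Set.Icc ((G + N ω) * a) ((G + N ω) * b)} ∪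
          {ω | M ≤ N ω}) := by
        refine ENNReal.toReal_mono (measure_ne_top _ _) (measure_mono_ae ?_)
        filter_upwards [hN0] with ω (hω : 0 ≤ N ω) (hbad : X ω ∉ Set.Icc _ _)
        show X ω ∉ Set.Icc _ _ ∨ M ≤ N ω
        by_contra! hgood
        obtain ⟨⟨hlow, hup⟩, hNM⟩ := hgood
        exact hbad ⟨by nlinarith, by nlinarith⟩
    _ ≤ μ.real {ω | X ω ∉ Set.Icc ((G + N ω) * a) ((G + N ω) * b)} +
          μ.real {ω | M ≤ N ω} :=
        measureReal_union_le _ _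
    _ ≤ _ := by
        gcongr
        rw [le_div_iff₀ hM, mul_comm]
        exact mul_meas_ge_le_integral_of_nonneg hN0 hN M

lemma measureReal_notMem_Icc_le_of_noisy_estimate [IsProbabilityMeasure μ] {N X : Ω → ℝ}
    (hNm : Measurable N) (hXm : Measurable X) (hN0 : 0 ≤ᵐ[μ] N) (hN : Integrable N μ)
    {ε_US ε δ_US c G_i G_S w : ℝ} (hε_US₀ : 0 ≤ ε_US) (hε_US₁ : ε_US ≤ 1) (hε : 0 < ε)
    (hc : 0 < c) (hGS : 0 < G_S) (hw : w = c * (1 + ε_US) / ε) (hNexp : μ[N] ≤ G_S / w)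
    (hX : ENNReal.ofReal (1 - δ_US) ≤
      μ {ω | (G_i + N ω) * (1 - ε_US) ≤ X ω ∧ X ω ≤ (G_i + N ω) * (1 + ε_US)}) :
    μ.real {ω | X ω ∉ Set.Icc (G_i * (1 - ε_US)) (G_i * (1 + ε_US) + ε * G_S)} ≤
      δ_US + 1 / c := by
  set M := ε * G_S / (1 + ε_US)
  have hM : 0 < M := by positivity
  have hMU : (G_i + M) * (1 + ε_US) = G_i * (1 + ε_US) + ε * G_S := by
    simp only [M]
    field_simp
  have hgood : μ.real {ω | X ω ∉
      Set.Icc ((G_i + N ω) * (1 - ε_US)) ((G_i + N ω) * (1 + ε_US))} ≤ δ_US :=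
    measureReal_compl_le_of_ofReal_one_sub_le
      ((measurableSet_le ((hNm.const_add G_i).mul_const _) hXm).inter
        (measurableSet_le hXm ((hNm.const_add G_i).mul_const _))) hX
  have hMarkov : μ[N] / M ≤ 1 / c :=
    (div_le_div_of_nonneg_right hNexp hM.le).trans_eq (by simp only [hw, M]; field_simp)
  linarith [measureReal_notMem_Icc_le_add_integral_div (X := X) hN0 hN
    (by linarith : 0 ≤ 1 - ε_US) (by linarith : 0 ≤ 1 + ε_US) hM hMU.le]

lemma ofReal_one_sub_exp_le_measure_sortedMedian_mem [IsProbabilityMeasure μ] {r : ℕ}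
    (hr : 0 < r) {X : Fin r → Ω → ℝ} (hind : iIndepFun X μ) (hX : ∀ j, Measurable (X j))
    {s : Set ℝ} (hs : MeasurableSet s) (hsc : s.OrdConnected) {q : ℝ}
    (hq : ∀ j, μ.real {ω | X j ω ∉ s} ≤ q) (hq2 : q ≤ 1 / 2) :
    ENNReal.ofReal (1 - Real.exp (-2 * r * (1 / 2 - q) ^ 2)) ≤
      μ {ω | sortedMedian hr (fun j => X j ω) ∈ s} := by
  classical
  have htail := measureReal_mul_card_le_card_filter_mem_le_exp hind hX hs.compl hq hq2
  rw [Fintype.card_fin] at htail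
  refine (ofReal_one_sub_le_measure_compl_of_measureReal_le htail).trans
    (measure_mono fun ω hω => ?_)
  have hcount := card_filter_add_card_filter_not (s := univ) (fun j => X j ω ∈ s)
  simp only [Set.mem_compl_iff, Set.mem_ofPred_eq, not_le, card_univ, Fintype.card_fin]
    at hω hcount
  have hbad : 2 * #{j | X j ω ∉ s} < r := by
    exact_mod_cast (by linarith : (2 * #{j | X j ω ∉ s} : ℝ) < r)
  have hgood : r < 2 * #{j | X j ω ∈ s} := by omega
  exact sortedMedian_mem_of_lt_two_mul_card hr (fun j => X j ω) hsc hgood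

end

theorem hydra_theorem2_rows_general {Ω : Type*} [MeasurableSpace Ω] (μ : Measure Ω)
    [IsProbabilityMeasure μ]
    (r : ℕ) (hr : 0 < r)
    (ε_US ε δ_US c p G_i G_S w : ℝ)
    (hε_US : ε_US ∈ Set.Ioo (0 : ℝ) 1) (hε : 0 < ε) (hc : 0 < c)
    (hp : p = 1 - δ_US - 1 / c) (hp2 : 1 / 2 < p)
    (hGS : 0 < G_S) (hw : w = c * (1 + ε_US) / ε)
    (N X : Fin r → Ω → ℝ)
    (hNm : ∀ j, Measurable (N j)) (hXm : ∀ j, Measurable (X j))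
    (hindep : iIndepFun
      (fun j ω => (N j ω, X j ω)) μ)
    (hNnonneg : ∀ j, ∀ᵐ ω ∂μ, 0 ≤ N j ω)
    (hNint : ∀ j, Integrable (N j) μ)
    (hNexp : ∀ j, ∫ ω, N j ω ∂μ ≤ G_S / w)
    (hX : ∀ j, ENNReal.ofReal (1 - δ_US) ≤
      μ {ω | (G_i + N j ω) * (1 - ε_US) ≤ X j ω ∧ X j ω ≤ (G_i + N j ω) * (1 + ε_US)})
    (δ : ℝ) (hδ : δ ∈ Set.Ioo (0 : ℝ) 1)
    (hrδ : Real.log (1 / δ) / (2 * (p - 1 / 2) ^ 2) ≤ (r : ℝ)) :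
    ENNReal.ofReal (1 - δ) ≤
      μ {ω | G_i * (1 - ε_US) ≤ sortedMedian hr (fun j => X j ω) ∧
             sortedMedian hr (fun j => X j ω) ≤ G_i * (1 + ε_US) + ε * G_S} := by
  obtain ⟨hε_US₀, hε_US₁⟩ := hε_US
  have hrow : ∀ j, μ.real {ω | X j ω ∉
      Set.Icc (G_i * (1 - ε_US)) (G_i * (1 + ε_US) + ε * G_S)} ≤ 1 - p := fun j =>
    (measureReal_notMem_Icc_le_of_noisy_estimate (hNm j) (hXm j) (hNnonneg j) (hNint j)
      hε_US₀.le hε_US₁.le hε hc hGS hw (hNexp j) (hX j)).trans_eq (by rw [hp]; ring)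
  have hexp : Real.exp (-2 * r * (1 / 2 - (1 - p)) ^ 2) ≤ δ := by
    rw [← Real.le_log_iff_exp_le hδ.1]
    rw [div_le_iff₀ (by nlinarith), one_div, Real.log_inv] at hrδ
    linarith
  calc ENNReal.ofReal (1 - δ)
      ≤ ENNReal.ofReal (1 - Real.exp (-2 * r * (1 / 2 - (1 - p)) ^ 2)) :=
        ENNReal.ofReal_le_ofReal (by linarith)
    _ ≤ _ := ofReal_one_sub_exp_le_measure_sortedMedian_mem hr
        (hindep.comp (fun _ => Prod.snd) fun _ => measurable_snd) hXm measurableSet_Icc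
        Set.ordConnected_Icc hrow (by linarith)

/-- Hydra's Theorem 2 (accuracy guarantee of the Hydra-sketch): with `r` rows of
width `w = c(1 + ε_US)/ε`, mutually independent per-row pairs `(N_j, X_j)` of
collision noise and universal-sketch estimate, `N_j ≥ 0` a.e. with
`E[N_j] ≤ G_S / w`, and each `X_j` approximating `G_i + N_j` within a
`(1 ± ε_US)` factor with probability at least `1 − δ_US`, the median `Ĝ_i` of the
per-row estimates satisfies `G_i(1 − ε_US) ≤ Ĝ_i ≤ G_i(1 + ε_US) + ε·G_S` with
probability at least `1 − exp(−2 r (p − 1/2)²)` where `p = 1 − δ_US − 1/c`. -/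
theorem hydra_theorem2_rows {Ω : Type*} [MeasurableSpace Ω] (μ : Measure Ω)
    [IsProbabilityMeasure μ]
    (r : ℕ) (hr : 0 < r)
    (ε_US ε δ_US c p G_i G_S w : ℝ)
    (hε_US : ε_US ∈ Set.Ioo (0 : ℝ) 1) (hε : 0 < ε) (hδ_US : 0 ≤ δ_US) (hc : 0 < c)
    (hp : p = 1 - δ_US - 1 / c) (hp2 : 1 / 2 < p)
    (hGi : 0 ≤ G_i) (hGS : 0 < G_S) (hw : w = c * (1 + ε_US) / ε)
    (N X : Fin r → Ω → ℝ)
    (hNm : ∀ j, Measurable (N j)) (hXm : ∀ j, Measurable (X j))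
    (hindep : iIndepFun
      (fun j ω => (N j ω, X j ω)) μ)
    (hNnonneg : ∀ j, ∀ᵐ ω ∂μ, 0 ≤ N j ω)
    (hNint : ∀ j, Integrable (N j) μ)
    (hNexp : ∀ j, ∫ ω, N j ω ∂μ ≤ G_S / w)
    (hX : ∀ j, ENNReal.ofReal (1 - δ_US) ≤
      μ {ω | (G_i + N j ω) * (1 - ε_US) ≤ X j ω ∧ X j ω ≤ (G_i + N j ω) * (1 + ε_US)})
    (δ : ℝ) (hδ : δ ∈ Set.Ioo (0 : ℝ) 1)
    (hrδ : Real.log (1 / δ) / (2 * (p - 1 / 2) ^ 2) ≤ (r : ℝ)) :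
    ENNReal.ofReal (1 - δ) ≤
      μ {ω | G_i * (1 - ε_US) ≤ sortedMedian hr (fun j => X j ω) ∧
             sortedMedian hr (fun j => X j ω) ≤ G_i * (1 + ε_US) + ε * G_S} :=
  hydra_theorem2_rows_general μ r hr ε_US ε δ_US c p G_i G_S w hε_US hε hc hp hp2 hGS hw N X hNm hXm
    hindep hNnonneg hNint hNexp hX δ hδ hrδ
end
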